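/- arXiv:2511.16973 — 2 statements merged into one kernel-verified Lean document; each statement's English description precedes it below -/
import Mathlib

section
/- Suppose μ is a σ-finite measure on (0,∞) with ∫_{(0,1]} z μ(dz) = ∞; fix constants k₀, k₂, σ̲ > 0 and define Φ(u) = −u k₀ + k₂ σ̲ ∫₀^∞ (e^{−zu} − 1 + zu) μ(dz). Then there exists c > 0 with Φ(c) > 1. -/
open MeasureTheory

/-- If `μ` is a σ-finite measure on `(0,∞)` with `∫_(0,1] z μ(dz) = ∞`, and
`k₀, k₂, σ > 0`, then `Φ(u) = -u k₀ + k₂ σ ∫ (e^{-zu} - 1 + zu) μ(dz)` satisfies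
`Φ(c) > 1` for some `c > 0` (stated as `1 + c k₀ < k₂ σ ∫ …` in `ℝ≥0∞`). -/
theorem exists_Phi_gt_one (μ : Measure ℝ) [SigmaFinite μ]
    (hsupp : μ (Set.Iic 0) = 0)
    (hdiv : ∫⁻ z in Set.Ioc (0:ℝ) 1, ENNReal.ofReal z ∂μ = ⊤)
    (k₀ k₂ σ : ℝ) (hk₀ : 0 < k₀) (hk₂ : 0 < k₂) (hσ : 0 < σ) :
    ∃ c : ℝ, 0 < c ∧
      ENNReal.ofReal (1 + c * k₀)
        < ENNReal.ofReal (k₂ * σ) *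
          ∫⁻ z, ENNReal.ofReal (Real.exp (-z * c) - 1 + z * c) ∂μ := by
  have hkσ : 0 < k₂ * σ := mul_pos hk₂ hσ
  set M : ℝ := (2 / (k₂ * σ)) * (1 + k₀) with hM
  have hMpos : 0 < M := by positivity
  -- sets
  set s : ℕ → Set ℝ := fun n => Set.Ioc (1 / (n + 1 : ℝ)) 1 with hs
  have hsmono : Monotone s := by
    intro a b hab
    apply Set.Ioc_subset_Ioc_left
    apply one_div_le_one_div_of_le (by positivity)
    have : (a : ℝ) ≤ b := Nat.cast_le.mpr hab
    linarith
  have hUnion : (⋃ n, s n) = Set.Ioc (0 : ℝ) 1 := by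
    ext z
    simp only [Set.mem_iUnion, hs, Set.mem_Ioc]
    constructor
    · rintro ⟨n, h1, h2⟩
      exact ⟨lt_trans (by positivity) h1, h2⟩
    · rintro ⟨h1, h2⟩
      obtain ⟨n, hn⟩ := exists_nat_gt (1 / z)
      refine ⟨n, ?_, h2⟩
      rw [div_lt_iff₀ (by positivity)]
      rw [div_lt_iff₀ h1] at hn
      nlinarith
  set ν := μ.withDensity (fun z => ENNReal.ofReal z) with hν
  have hνs : ∀ n, ν (s n) = ∫⁻ z in s n, ENNReal.ofReal z ∂μ := fun n =>
    withDensity_apply _ measurableSet_Ioc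
  have hνtop : ν (Set.Ioc (0:ℝ) 1) = ⊤ := by
    rw [hν, withDensity_apply _ measurableSet_Ioc]; exact hdiv
  have hsup : (⨆ n, ν (s n)) = ⊤ := by
    rw [← hsmono.directed_le.measure_iUnion, hUnion, hνtop]
  have hex : ∃ n, ENNReal.ofReal M < ν (s n) := by
    rw [← lt_iSup_iff, hsup]; exact ENNReal.ofReal_lt_top
  obtain ⟨n, hn⟩ := hex
  set c : ℝ := 2 * (n + 1) with hc
  have hcpos : 0 < c := by positivity
  have hc1 : 1 ≤ c := by
    have : (0:ℝ) ≤ n := Nat.cast_nonneg n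
    simp only [hc]; linarith
  refine ⟨c, hcpos, ?_⟩
  -- lower bound on integrand on s n
  have hpt : ∀ z ∈ s n, ENNReal.ofReal (c / 2) * ENNReal.ofReal z
      ≤ ENNReal.ofReal (Real.exp (-z * c) - 1 + z * c) := by
    intro z hz
    rw [← ENNReal.ofReal_mul (by positivity)]
    apply ENNReal.ofReal_le_ofReal
    obtain ⟨h1, h2⟩ := hz
    have hzc : 2 ≤ z * c := by
      have h1' : 1 / (n + 1 : ℝ) < z := h1
      rw [div_lt_iff₀ (by positivity)] at h1'
      calc (2:ℝ) = 2 * 1 := by ring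
      _ ≤ 2 * (z * (n+1)) := by nlinarith
      _ = z * c := by rw [hc]; ring
    have hexp : (0:ℝ) < Real.exp (-z * c) := Real.exp_pos _
    nlinarith
  have hmeas : Measurable fun z : ℝ => ENNReal.ofReal (Real.exp (-z * c) - 1 + z * c) := by
    apply Measurable.ennreal_ofReal
    exact ((measurable_id.neg.mul_const c).exp.sub measurable_const).add (measurable_id.mul_const c)
  have key : ENNReal.ofReal (c / 2) * ν (s n)
      ≤ ∫⁻ z, ENNReal.ofReal (Real.exp (-z * c) - 1 + z * c) ∂μ := by
    rw [hνs n, ← lintegral_const_mul _ ENNReal.measurable_ofReal]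
    calc ∫⁻ z in s n, ENNReal.ofReal (c/2) * ENNReal.ofReal z ∂μ
        ≤ ∫⁻ z in s n, ENNReal.ofReal (Real.exp (-z * c) - 1 + z * c) ∂μ :=
          setLIntegral_mono hmeas hpt
      _ ≤ _ := setLIntegral_le_lintegral _ _
  calc ENNReal.ofReal (1 + c * k₀)
      ≤ ENNReal.ofReal (k₂ * σ * (c / 2) * M) := by
        apply ENNReal.ofReal_le_ofReal
        have : k₂ * σ * (c / 2) * M = c * (1 + k₀) := by
          rw [hM]; field_simp
        rw [this]; nlinarith
    _ = ENNReal.ofReal (k₂ * σ * (c / 2)) * ENNReal.ofReal M := by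
        rw [← ENNReal.ofReal_mul (by positivity)]
    _ < ENNReal.ofReal (k₂ * σ * (c / 2)) * ν (s n) := by
        apply ENNReal.mul_lt_mul_iff_right (by simp [ENNReal.ofReal_pos.mpr]; positivity)
          ENNReal.ofReal_ne_top |>.mpr hn
    _ = ENNReal.ofReal (k₂ * σ) * (ENNReal.ofReal (c / 2) * ν (s n)) := by
        rw [ENNReal.ofReal_mul (le_of_lt hkσ), mul_assoc]
    _ ≤ _ := by
        exact mul_le_mul_right key _
end

section
/- Let φ_k be the Yamada–Watanabe functions built from ψ_k with ψ_k(x) ≤ 2/(kx). Then for all x ∈ ℝ and z with xz ≥ 0 and x ≠ 0: D_z φ_k(x) := φ_k(x+z) − φ_k(x) − z φ_k′(x) satisfies 0 ≤ D_z φ_k(x) ≤ min( |z|, z²/(k|x|) ). -/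
open intervalIntegral MeasureTheory

/-- Core estimate for positive `x` and nonnegative `z`:
`∫ t in x..x+z, F t - z * F x` is nonnegative and bounded by `min z (z²/(k x))`,
where `F t = ∫ s in 0..t, ψ s`. -/
lemma yw_aux (ψ : ℝ → ℝ) (k : ℕ) (hkpos : 0 < (k:ℝ))
    (hcont : Continuous ψ) (hnonneg : ∀ x, 0 ≤ ψ x)
    (hone : ∀ u v : ℝ, u ≤ v → (∫ s in u..v, ψ s) ≤ 1)
    (x : ℝ) (hx : 0 < x)
    (hb : ∀ s : ℝ, x ≤ s → ψ s ≤ 2 / (k * x))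
    (z : ℝ) (hz : 0 ≤ z) :
    0 ≤ (∫ t in x..(x+z), (∫ s in (0:ℝ)..t, ψ s)) - z * (∫ s in (0:ℝ)..x, ψ s) ∧
    (∫ t in x..(x+z), (∫ s in (0:ℝ)..t, ψ s)) - z * (∫ s in (0:ℝ)..x, ψ s)
      ≤ min z (z ^ 2 / (k * x)) := by
  set F : ℝ → ℝ := fun t => ∫ s in (0:ℝ)..t, ψ s with hF
  have hFcont : Continuous F :=
    intervalIntegral.continuous_primitive (fun a b => hcont.intervalIntegrable a b) 0
  have hxz : x ≤ x + z := by linarith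
  have hconst : z * F x = ∫ _t in x..(x+z), F x := by
    rw [intervalIntegral.integral_const, add_sub_cancel_left, smul_eq_mul]
  have hFint : IntervalIntegrable F volume x (x + z) :=
    hFcont.intervalIntegrable _ _
  have hcint : IntervalIntegrable (fun _ : ℝ => F x) volume x (x + z) :=
    intervalIntegrable_const
  have hD : (∫ t in x..(x+z), F t) - z * F x
      = ∫ t in x..(x+z), (F t - F x) := by
    rw [hconst, ← intervalIntegral.integral_sub hFint hcint]
  -- the increment of F
  have hFsub : ∀ t : ℝ, F t - F x = ∫ s in x..t, ψ s := fun t =>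
    intervalIntegral.integral_interval_sub_left (hcont.intervalIntegrable _ _)
      (hcont.intervalIntegrable _ _)
  have hmono : ∀ t ∈ Set.Icc x (x+z), 0 ≤ F t - F x := by
    intro t ht
    rw [hFsub]
    exact intervalIntegral.integral_nonneg ht.1 (fun s _ => hnonneg s)
  constructor
  · rw [hD]
    exact intervalIntegral.integral_nonneg hxz (fun t ht => hmono t ht)
  · have hgsub : IntervalIntegrable (fun t => F t - F x) volume x (x + z) :=
      hFint.sub hcint
    refine le_min ?_ ?_
    · -- bound by z using F t - F x ≤ 1
      rw [hD]
      calc (∫ t in x..(x+z), (F t - F x))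
          ≤ ∫ _t in x..(x+z), (1:ℝ) := by
            refine intervalIntegral.integral_mono_on hxz hgsub
              intervalIntegrable_const (fun t ht => ?_)
            rw [hFsub]
            exact hone x t ht.1
        _ = z := by simp
    · -- bound by z^2/(k x)
      have hkx : 0 < (k:ℝ) * x := by positivity
      have hc : (0:ℝ) ≤ 2 / (k * x) := by positivity
      rw [hD]
      have key : ∀ t ∈ Set.Icc x (x+z), F t - F x ≤ (t - x) * (2 / (k * x)) := by
        intro t ht
        rw [hFsub]
        calc (∫ s in x..t, ψ s)
            ≤ ∫ _s in x..t, (2 / ((k:ℝ) * x)) :=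
              intervalIntegral.integral_mono_on ht.1
                (hcont.intervalIntegrable _ _) intervalIntegrable_const
                (fun s hs => hb s hs.1)
          _ = (t - x) * (2 / (k * x)) := by
              rw [intervalIntegral.integral_const, smul_eq_mul]
      calc (∫ t in x..(x+z), (F t - F x))
          ≤ ∫ t in x..(x+z), (t - x) * (2 / (k * x)) := by
            refine intervalIntegral.integral_mono_on hxz hgsub ?_ key
            exact (((continuous_id.sub continuous_const).mul
              continuous_const).intervalIntegrable _ _)
        _ = z ^ 2 / (k * x) := by
            rw [intervalIntegral.integral_mul_const]
            have : (∫ t in x..(x+z), (t - x)) = ∫ t in (0:ℝ)..z, t := by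
              have := intervalIntegral.integral_comp_sub_right
                (a := x) (b := x + z) (fun u : ℝ => u) x
              simpa using this
            rw [this, integral_id]
            ring

/-- For the Yamada–Watanabe test functions `φ k`, if `x z ≥ 0` and `x ≠ 0` then
`0 ≤ D_z φ_k x ≤ min |z| (z² / (k |x|))`, where
`D_z φ_k x = φ k (x+z) - φ k x - z * (φ k)' x`. -/
theorem yamada_watanabe_increment_bound
    (a : ℕ → ℝ) (ha : ∀ k : ℕ, a k = Real.exp (-(k * (k + 1)) / 2))
    (ψ : ℕ → ℝ → ℝ) (k : ℕ) (hk : 1 ≤ k)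
    (hcont : Continuous (ψ k))
    (hnonneg : ∀ x, 0 ≤ ψ k x)
    (hsupp : Function.support (ψ k) ⊆ Set.Ioo (a k) (a (k - 1)))
    (hint : ∫ x, ψ k x = 1)
    (hbound : ∀ x ∈ Set.Ioo (a k) (a (k - 1)), ψ k x ≤ 2 / (k * x))
    (φ : ℕ → ℝ → ℝ)
    (hφ : ∀ j z, φ j z = ∫ y in (0:ℝ)..|z|, ∫ x in (0:ℝ)..y, ψ j x) :
    ∀ x z : ℝ, 0 ≤ x * z → x ≠ 0 →
      0 ≤ φ k (x + z) - φ k x - z * deriv (φ k) x ∧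
      φ k (x + z) - φ k x - z * deriv (φ k) x
        ≤ min |z| (z ^ 2 / (k * |x|)) := by
  intro x z hxz hx0
  set F : ℝ → ℝ := fun t => ∫ s in (0:ℝ)..t, ψ k s with hF
  have hFcont : Continuous F :=
    intervalIntegral.continuous_primitive (fun a b => (hcont.intervalIntegrable a b)) 0
  -- integrability of ψ k on ℝ
  have hψint : Integrable (ψ k) := by
    have hcs : HasCompactSupport (ψ k) := by
      refine HasCompactSupport.intro (isCompact_Icc (a := a k) (b := a (k-1))) ?_
      intro s hs
      by_contra h
      exact hs (Set.Ioo_subset_Icc_self (hsupp h))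
    exact hcont.integrable_of_hasCompactSupport hcs
  -- interval integrals of ψ are ≤ 1
  have hone : ∀ u v : ℝ, u ≤ v → (∫ s in u..v, ψ k s) ≤ 1 := by
    intro u v huv
    rw [intervalIntegral.integral_of_le huv, ← hint]
    exact setIntegral_le_integral hψint
      (Filter.Eventually.of_forall fun s => hnonneg s)
  -- pointwise bound ψ k s ≤ 2 / (k * c) for positive c ≤ s
  have hb : ∀ c : ℝ, 0 < c → ∀ s : ℝ, c ≤ s → ψ k s ≤ 2 / (k * c) := by
    intro c hc s hcs
    have hkc : (0:ℝ) < (k:ℝ) * c := by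
      have : (0:ℝ) < (k:ℝ) := by exact_mod_cast hk
      positivity
    by_cases hzs : ψ k s = 0
    · rw [hzs]; positivity
    · have hmem : s ∈ Set.Ioo (a k) (a (k-1)) := hsupp hzs
      calc ψ k s ≤ 2 / (k * s) := hbound s hmem
        _ ≤ 2 / (k * c) := by
          have hks : (0:ℝ) < (k:ℝ) * c := hkc
          apply div_le_div_of_nonneg_left (by norm_num) hks
          have : (0:ℝ) < (k:ℝ) := by exact_mod_cast hk
          nlinarith
  rcases lt_or_gt_of_ne hx0 with hxneg | hxpos
  · -- x < 0, hence z ≤ 0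
    have hzneg : z ≤ 0 := by
      by_contra h
      push_neg at h
      nlinarith
    -- derivative of φ k at x
    have hderiv : deriv (φ k) x = -F (-x) := by
      have hG : HasDerivAt (fun w => ∫ y in (0:ℝ)..w, F y) (F (-x)) (-x) :=
        (hFcont.integral_hasStrictDerivAt 0 (-x)).hasDerivAt
      have hcomp : HasDerivAt (fun w : ℝ => ∫ y in (0:ℝ)..(-w), F y) (-F (-x)) x := by
        have := hG.comp x (hasDerivAt_neg x)
        simpa [mul_comm, Function.comp_def] using this
      have heq : φ k =ᶠ[nhds x] (fun w : ℝ => ∫ y in (0:ℝ)..(-w), F y) := by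
        filter_upwards [eventually_lt_nhds hxneg] with w hw
        rw [hφ, abs_of_neg hw]
      rw [Filter.EventuallyEq.deriv_eq heq]
      exact hcomp.deriv
    have hφx : φ k x = ∫ y in (0:ℝ)..(-x), F y := by
      rw [hφ, abs_of_neg hxneg]
    have hφxz : φ k (x + z) = ∫ y in (0:ℝ)..(-(x+z)), F y := by
      rw [hφ, abs_of_neg (by linarith)]
    have key := yw_aux (ψ k) k (by exact_mod_cast hk) hcont hnonneg hone (-x) (by linarith)
      (hb (-x) (by linarith)) (-z) (by linarith)
    have hsplit : (∫ y in (0:ℝ)..(-(x+z)), F y) - (∫ y in (0:ℝ)..(-x), F y)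
        = ∫ y in (-x)..(-x + -z), F y := by
      have := intervalIntegral.integral_interval_sub_left
        (f := F) (μ := volume) (a := (0:ℝ)) (b := -(x+z)) (c := -x)
        (hFcont.intervalIntegrable _ _) (hFcont.intervalIntegrable _ _)
      rw [this, show -(x+z) = -x + -z from by ring]
    have hDeq : φ k (x + z) - φ k x - z * deriv (φ k) x
        = (∫ t in (-x)..(-x + -z), F t) - (-z) * F (-x) := by
      rw [hφx, hφxz, hderiv, ← hsplit]; ring
    rw [hDeq]
    constructor
    · exact key.1
    · have : min (-z) ((-z) ^ 2 / (↑k * -x)) = min |z| (z ^ 2 / (↑k * |x|)) := by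
        rw [abs_of_neg hxneg, abs_of_nonpos hzneg]
        ring_nf
      rw [← this]
      exact key.2
  · -- x > 0, hence z ≥ 0
    have hzpos : 0 ≤ z := by
      by_contra h
      push_neg at h
      nlinarith
    have hderiv : deriv (φ k) x = F x := by
      have heq : φ k =ᶠ[nhds x] (fun w : ℝ => ∫ y in (0:ℝ)..w, F y) := by
        filter_upwards [eventually_gt_nhds hxpos] with w hw
        rw [hφ, abs_of_pos hw]
      rw [Filter.EventuallyEq.deriv_eq heq]
      exact (hFcont.integral_hasStrictDerivAt 0 x).hasDerivAt.deriv
    have hφx : φ k x = ∫ y in (0:ℝ)..x, F y := by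
      rw [hφ, abs_of_pos hxpos]
    have hφxz : φ k (x + z) = ∫ y in (0:ℝ)..(x+z), F y := by
      rw [hφ, abs_of_pos (by linarith)]
    have key := yw_aux (ψ k) k (by exact_mod_cast hk) hcont hnonneg hone x hxpos (hb x hxpos) z hzpos
    have hsplit : (∫ y in (0:ℝ)..(x+z), F y) - (∫ y in (0:ℝ)..x, F y)
        = ∫ y in x..(x + z), F y :=
      intervalIntegral.integral_interval_sub_left
        (hFcont.intervalIntegrable _ _) (hFcont.intervalIntegrable _ _)
    have hDeq : φ k (x + z) - φ k x - z * deriv (φ k) x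
        = (∫ t in x..(x + z), F t) - z * F x := by
      rw [hφx, hφxz, hderiv, ← hsplit]
    rw [hDeq, abs_of_pos hxpos, abs_of_nonneg hzpos]
    exact key
end
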